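/- Let (M,g) be a singular semi-Riemannian manifold, P a fixed vector field on M, and K̂ the associated semi-symmetric non-metric Koszul form. Then for all smooth vector fields X,Y,Z on M and all f ∈ C^∞(M): (1) K̂ is additive and ℝ-linear in each of its three arguments; (2) K̂(fX,Y,Z) = f·K̂(X,Y,Z); (3) K̂(X,fY,Z) = f·K̂(X,Y,Z) + X(f)⟨Y,Z⟩; (4) K̂(X,Y,fZ) = f·K̂(X,Y,Z); (5) K̂(X,Y,Z) + K̂(X,Z,Y) = X⟨Y,Z⟩ + g(Y,P)g(X,Z) + g(Z,P)g(X,Y); (6) K̂(X,Y,Z) − K̂(Y,X,Z) = ⟨[X,Y] + g(Y,P)X − g(X,P)Y, Z⟩; (7) K̂(X,Y,Z) + K̂(Z,Y,X) = (L_Y g)(Z,X) + 2g(Y,P)g(X,Z); (8) K̂(X,Y,Z) + K̂(Y,Z,X) = Y⟨Z,X⟩ + ⟨[X,Y],Z⟩ + g(Y,P)g(X,Z) + g(Z,P)g(X,Y). -/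

import Mathlib

noncomputable section

/-!
An algebraic (Koszul-style) model of singular semi-Riemannian manifolds, following
Stoica's "singular semi-Riemannian geometry".

* `M` is the set of points of the smooth manifold;
* `T p` is the tangent space at `p : M`;
* `IsFn h` says that `h : M → ℝ` is a smooth function, i.e. `h ∈ C^∞(M)`;
* `IsVF X` says that the section `X : ∀ p, T p` of the tangent bundle is a smooth
  vector field, i.e. `X ∈ Γ(TM)`;
* `D X h` is the derivative `X(h)` of the smooth function `h` along `X`;
* `bracket X Y` is the Lie bracket `[X,Y]` of vector fields;
* `g` is the metric: a smooth symmetric bilinear form on the tangent bundle, which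
  may be degenerate and of variable signature.
-/
structure SSRM (M : Type*) (T : M → Type*)
    [∀ p, AddCommGroup (T p)] [∀ p, Module ℝ (T p)] where
  /-- the smooth real functions `C^∞(M)` -/
  IsFn : (M → ℝ) → Prop
  /-- the smooth vector fields `Γ(TM)` -/
  IsVF : (∀ p, T p) → Prop
  /-- the directional derivative `X(h)` of a function along a vector field -/
  D : (∀ p, T p) → (M → ℝ) → M → ℝ
  /-- the Lie bracket of vector fields -/
  bracket : (∀ p, T p) → (∀ p, T p) → ∀ p, T p
  /-- the (possibly degenerate) metric, pointwise a bilinear form -/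
  g : ∀ p, T p →ₗ[ℝ] T p →ₗ[ℝ] ℝ
  g_symm : ∀ p u v, g p u v = g p v u
  fn_const : ∀ c : ℝ, IsFn fun _ => c
  fn_add : ∀ a b, IsFn a → IsFn b → IsFn (a + b)
  fn_mul : ∀ a b, IsFn a → IsFn b → IsFn (a * b)
  vf_add : ∀ X Y, IsVF X → IsVF Y → IsVF (X + Y)
  vf_smul : ∀ a X, IsFn a → IsVF X → IsVF fun p => a p • X p
  vf_smulR : ∀ (r : ℝ) X, IsVF X → IsVF (r • X)
  g_smooth : ∀ X Y, IsVF X → IsVF Y → IsFn fun p => g p (X p) (Y p)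
  D_smooth : ∀ X a, IsVF X → IsFn a → IsFn (D X a)
  D_add_fn : ∀ X a b, IsVF X → IsFn a → IsFn b → D X (a + b) = D X a + D X b
  D_mul_fn : ∀ X a b, IsVF X → IsFn a → IsFn b → D X (a * b) = D X a * b + a * D X b
  D_const : ∀ X (c : ℝ), IsVF X → D X (fun _ => c) = 0
  D_add_vf : ∀ X Y a, IsVF X → IsVF Y → IsFn a → D (X + Y) a = D X a + D Y a
  D_smul_vf : ∀ b X a, IsFn b → IsVF X → IsFn a →
    D (fun p => b p • X p) a = b * D X a
  bracket_smooth : ∀ X Y, IsVF X → IsVF Y → IsVF (bracket X Y)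
  bracket_antisymm : ∀ X Y, IsVF X → IsVF Y → bracket X Y = -bracket Y X
  bracket_add_left : ∀ X Y Z, IsVF X → IsVF Y → IsVF Z →
    bracket (X + Y) Z = bracket X Z + bracket Y Z
  bracket_leibniz : ∀ X a Y, IsVF X → IsFn a → IsVF Y →
    bracket X (fun p => a p • Y p)
      = (fun p => a p • bracket X Y p) + (fun p => D X a p • Y p)
  D_bracket : ∀ X Y a, IsVF X → IsVF Y → IsFn a →
    D (bracket X Y) a = D X (D Y a) - D Y (D X a)

namespace SSRM

variable {M : Type*} {T : M → Type*} [∀ p, AddCommGroup (T p)] [∀ p, Module ℝ (T p)]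

/-- `⟨X,Y⟩ = g(X,Y)`, as a function on `M`. -/
def gf (S : SSRM M T) (X Y : ∀ p, T p) : M → ℝ := fun p => S.g p (X p) (Y p)

/-- The Koszul form
`K(X,Y,Z) = (1/2){X⟨Y,Z⟩ + Y⟨Z,X⟩ − Z⟨X,Y⟩ − ⟨X,[Y,Z]⟩ + ⟨Y,[Z,X]⟩ + ⟨Z,[X,Y]⟩}`. -/
def K (S : SSRM M T) (X Y Z : ∀ p, T p) : M → ℝ :=
  ((1 : ℝ) / 2) • (S.D X (S.gf Y Z) + S.D Y (S.gf Z X) - S.D Z (S.gf X Y)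
    - S.gf X (S.bracket Y Z) + S.gf Y (S.bracket Z X) + S.gf Z (S.bracket X Y))

/-- The semi-symmetric metric Koszul form (w.r.t. the vector field `P`):
`K̄(X,Y,Z) = K(X,Y,Z) + g(Y,P)g(X,Z) − g(X,Y)g(P,Z)`. -/
def Kbar (S : SSRM M T) (P X Y Z : ∀ p, T p) : M → ℝ :=
  S.K X Y Z + S.gf Y P * S.gf X Z - S.gf X Y * S.gf P Z

/-- The semi-symmetric non-metric Koszul form (w.r.t. the vector field `P`):
`K̂(X,Y,Z) = K(X,Y,Z) + g(Y,P)g(X,Z)`. -/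
def Khat (S : SSRM M T) (P X Y Z : ∀ p, T p) : M → ℝ :=
  S.K X Y Z + S.gf Y P * S.gf X Z

/-- The Lie derivative of the metric:
`(L_Y g)(Z,X) = Y(g(Z,X)) − g([Y,Z],X) − g(Z,[Y,X])`. -/
def lieD (S : SSRM M T) (Y Z X : ∀ p, T p) : M → ℝ :=
  S.D Y (S.gf Z X) - S.gf (S.bracket Y Z) X - S.gf Z (S.bracket Y X)

/-- `W ∈ Γ₀(TM)`: a smooth vector field with `g(W,Y) = 0` for every vector field `Y`. -/
def Gamma0 (S : SSRM M T) (W : ∀ p, T p) : Prop :=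
  S.IsVF W ∧ ∀ Y, S.IsVF Y → S.gf W Y = 0

/-- A 1-form `ω` (given by its action `ω(Z)` on vector fields) belongs to `A^•(M)`:
at every point `p` the covector `ω_p` lies in the image of the flat map
`v ↦ g_p(v,·) : T_pM → T_p*M`. -/
def MemAsup (S : SSRM M T) (ω : (∀ p, T p) → M → ℝ) : Prop :=
  ∀ p : M, ∃ v : T p, ∀ Z, S.IsVF Z → ω Z p = S.g p v (Z p)

/-- `(M,g)` is radical-stationary: `K(X,Y,·) ∈ A^•(M)` for all vector fields `X,Y`. -/
def RadicalStationary (S : SSRM M T) : Prop :=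
  ∀ X Y, S.IsVF X → S.IsVF Y → S.MemAsup fun Z => S.K X Y Z

/-- `Y^♭ = g(Y,·)`, as a 1-form. -/
def flat (S : SSRM M T) (Y : ∀ p, T p) : (∀ p, T p) → M → ℝ := fun Z => S.gf Y Z

/-- The semi-symmetric metric lower covariant derivative: `∇̄♭_X Y = K̄(X,Y,·)`. -/
def nablaFlatBar (S : SSRM M T) (P X Y : ∀ p, T p) : (∀ p, T p) → M → ℝ :=
  fun Z => S.Kbar P X Y Z

/-- The semi-symmetric non-metric lower covariant derivative: `∇̂♭_X Y = K̂(X,Y,·)`. -/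
def nablaFlatHat (S : SSRM M T) (P X Y : ∀ p, T p) : (∀ p, T p) → M → ℝ :=
  fun Z => S.Khat P X Y Z

/-- Pointwise application of a bundle map `J : TM → TM` to a vector field. -/
def Jv (J : ∀ p, T p →ₗ[ℝ] T p) (X : ∀ p, T p) : ∀ p, T p := fun p => J p (X p)

/-- `J` is an almost product structure on `(M,g)`: a smooth bundle map `J : TM → TM`
with `J² = id` and `g(JX,JY) = g(X,Y)`. -/
structure IsAlmostProduct (S : SSRM M T) (J : ∀ p, T p →ₗ[ℝ] T p) : Prop where
  invol : ∀ p v, J p (J p v) = v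
  compat : ∀ p u v, S.g p (J p u) (J p v) = S.g p u v
  smooth : ∀ X, S.IsVF X → S.IsVF (Jv J X)

/-- The almost product Koszul form `K̃(X,Y,Z) = (1/2)[K(X,Y,Z) + K(X,JY,JZ)]`. -/
def Ktilde (S : SSRM M T) (J : ∀ p, T p →ₗ[ℝ] T p) (X Y Z : ∀ p, T p) : M → ℝ :=
  ((1 : ℝ) / 2) • (S.K X Y Z + S.K X (Jv J Y) (Jv J Z))

/-- The almost product lower covariant derivative: `∇̃♭_X Y = K̃(X,Y,·)`. -/
def nablaFlatTilde (S : SSRM M T) (J : ∀ p, T p →ₗ[ℝ] T p) (X Y : ∀ p, T p) :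
    (∀ p, T p) → M → ℝ :=
  fun Z => S.Ktilde J X Y Z

end SSRM

/-!
`K̂ = K + C` with `C(X,Y,Z) = g(Y,P)g(X,Z)`. The correction `C` is tensorial in all three
arguments, so every property of `K̂` is the corresponding property of the Koszul form `K` plus
the contribution of `C`. For `K` itself, only additivity and the Leibniz rule in the middle
argument and the four symmetrisation identities need the Koszul formula; linearity in the
outer arguments then follows from the identities `K(X,Y,Z) + K(X,Z,Y) = X⟨Y,Z⟩` and
`K(X,Y,Z) − K(Y,X,Z) = ⟨[X,Y],Z⟩`, exactly as for the Levi-Civita connection.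
-/

namespace SSRM

variable {M : Type*} {T : M → Type*} [∀ p, AddCommGroup (T p)] [∀ p, Module ℝ (T p)]
variable (S : SSRM M T) {X X' Y Y' Z Z' : ∀ p, T p}

section Metric

variable (X X' Y Z)

lemma gf_comm : S.gf X Y = S.gf Y X :=
  funext fun p => S.g_symm p (X p) (Y p)

@[simp] lemma gf_add_left : S.gf (X + X') Z = S.gf X Z + S.gf X' Z := by
  funext p; simp [gf]

@[simp] lemma gf_add_right : S.gf Z (X + X') = S.gf Z X + S.gf Z X' := by
  funext p; simp [gf]

@[simp] lemma gf_sub_left : S.gf (X - X') Z = S.gf X Z - S.gf X' Z := by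
  funext p; simp [gf]

@[simp] lemma gf_sub_right : S.gf Z (X - X') = S.gf Z X - S.gf Z X' := by
  funext p; simp [gf]

@[simp] lemma gf_neg_right : S.gf Z (-X) = -S.gf Z X := by
  funext p; simp [gf]

@[simp] lemma gf_smul_left (a : M → ℝ) : S.gf (fun p => a p • X p) Z = a * S.gf X Z := by
  funext p; simp [gf]

@[simp] lemma gf_smul_right (a : M → ℝ) : S.gf Z (fun p => a p • X p) = a * S.gf Z X := by
  funext p; simp [gf]

lemma gf_smooth {X Y : ∀ p, T p} (hX : S.IsVF X) (hY : S.IsVF Y) : S.IsFn (S.gf X Y) :=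
  S.g_smooth X Y hX hY

end Metric

lemma bracket_add_right (hX : S.IsVF X) (hY : S.IsVF Y) (hZ : S.IsVF Z) :
    S.bracket X (Y + Z) = S.bracket X Y + S.bracket X Z := by
  rw [S.bracket_antisymm X (Y + Z) hX (S.vf_add Y Z hY hZ), S.bracket_add_left Y Z X hY hZ hX,
    S.bracket_antisymm X Y hX hY, S.bracket_antisymm X Z hX hZ, neg_add]

lemma bracket_smul_left (a : M → ℝ) (ha : S.IsFn a) (hX : S.IsVF X) (hY : S.IsVF Y) :
    S.bracket (fun p => a p • X p) Y
      = (fun p => a p • S.bracket X Y p) - fun p => S.D Y a p • X p := by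
  rw [S.bracket_antisymm _ Y (S.vf_smul a X ha hX) hY, S.bracket_leibniz Y a X hY ha hX,
    S.bracket_antisymm X Y hX hY]
  funext p
  simp [smul_neg, sub_eq_neg_add]

lemma K_add_K_eq_D_gf (hX : S.IsVF X) (hY : S.IsVF Y) (hZ : S.IsVF Z) :
    S.K X Y Z + S.K X Z Y = S.D X (S.gf Y Z) := by
  rw [K, K, S.gf_comm Z Y, S.gf_comm X Z, S.gf_comm Y X, S.bracket_antisymm Z Y hZ hY,
    S.bracket_antisymm Y X hY hX, S.bracket_antisymm X Z hX hZ]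
  simp only [gf_neg_right]
  module

lemma K_sub_K_eq_gf_bracket (hX : S.IsVF X) (hY : S.IsVF Y) (hZ : S.IsVF Z) :
    S.K X Y Z - S.K Y X Z = S.gf (S.bracket X Y) Z := by
  rw [K, K, S.gf_comm X Z, S.gf_comm Z Y, S.gf_comm Y X, S.gf_comm (S.bracket X Y) Z,
    S.bracket_antisymm X Z hX hZ, S.bracket_antisymm Z Y hZ hY, S.bracket_antisymm Y X hY hX]
  simp only [gf_neg_right]
  module

lemma K_add_K_eq_lieD (hX : S.IsVF X) (hY : S.IsVF Y) (hZ : S.IsVF Z) :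
    S.K X Y Z + S.K Z Y X = S.lieD Y Z X := by
  rw [K, K, lieD, S.gf_comm X Z, S.gf_comm Y X, S.gf_comm Z Y, S.gf_comm (S.bracket Y Z) X,
    S.bracket_antisymm Y X hY hX, S.bracket_antisymm X Z hX hZ, S.bracket_antisymm Z Y hZ hY]
  simp only [gf_neg_right]
  module

lemma K_add_K_rotate (X Y Z : ∀ p, T p) :
    S.K X Y Z + S.K Y Z X = S.D Y (S.gf Z X) + S.gf (S.bracket X Y) Z := by
  rw [K, K, S.gf_comm (S.bracket X Y) Z]
  module

lemma K_add_middle (hX : S.IsVF X) (hY : S.IsVF Y) (hY' : S.IsVF Y') (hZ : S.IsVF Z) :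
    S.K X (Y + Y') Z = S.K X Y Z + S.K X Y' Z := by
  rw [K, K, K, S.bracket_add_left Y Y' Z hY hY' hZ, S.bracket_add_right hX hY hY']
  simp only [gf_add_left, gf_add_right]
  rw [S.D_add_fn X _ _ hX (S.gf_smooth hY hZ) (S.gf_smooth hY' hZ),
    S.D_add_vf Y Y' _ hY hY' (S.gf_smooth hZ hX),
    S.D_add_fn Z _ _ hZ (S.gf_smooth hX hY) (S.gf_smooth hX hY')]
  module

lemma K_smul_middle (f : M → ℝ) (hf : S.IsFn f) (hX : S.IsVF X) (hY : S.IsVF Y)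
    (hZ : S.IsVF Z) :
    S.K X (fun p => f p • Y p) Z = f * S.K X Y Z + S.D X f * S.gf Y Z := by
  rw [K, K, S.bracket_smul_left f hf hY hZ, S.bracket_leibniz X f Y hX hf hY]
  simp only [gf_smul_left, gf_smul_right, gf_sub_right, gf_add_right]
  rw [S.D_mul_fn X f _ hX hf (S.gf_smooth hY hZ), S.D_smul_vf f Y _ hf hY (S.gf_smooth hZ hX),
    S.D_mul_fn Z f _ hZ hf (S.gf_smooth hX hY), S.gf_comm Z Y]
  funext p
  simp only [Pi.add_apply, Pi.sub_apply, Pi.smul_apply, Pi.mul_apply, smul_eq_mul]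
  ring

lemma K_add_right (hX : S.IsVF X) (hY : S.IsVF Y) (hZ : S.IsVF Z) (hZ' : S.IsVF Z') :
    S.K X Y (Z + Z') = S.K X Y Z + S.K X Y Z' := by
  have hZZ' := S.vf_add Z Z' hZ hZ'
  rw [eq_sub_of_add_eq (S.K_add_K_eq_D_gf hX hY hZZ'), S.K_add_middle hX hZ hZ' hY,
    eq_sub_of_add_eq (S.K_add_K_eq_D_gf hX hY hZ), eq_sub_of_add_eq (S.K_add_K_eq_D_gf hX hY hZ'),
    gf_add_right, S.D_add_fn X _ _ hX (S.gf_smooth hY hZ) (S.gf_smooth hY hZ')]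
  abel

lemma K_add_left (hX : S.IsVF X) (hX' : S.IsVF X') (hY : S.IsVF Y) (hZ : S.IsVF Z) :
    S.K (X + X') Y Z = S.K X Y Z + S.K X' Y Z := by
  have hXX' := S.vf_add X X' hX hX'
  rw [eq_add_of_sub_eq (S.K_sub_K_eq_gf_bracket hXX' hY hZ), S.K_add_middle hY hX hX' hZ,
    eq_add_of_sub_eq (S.K_sub_K_eq_gf_bracket hX hY hZ),
    eq_add_of_sub_eq (S.K_sub_K_eq_gf_bracket hX' hY hZ), S.bracket_add_left X X' Y hX hX' hY,
    gf_add_left]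
  abel

lemma K_smul_right (f : M → ℝ) (hf : S.IsFn f) (hX : S.IsVF X) (hY : S.IsVF Y)
    (hZ : S.IsVF Z) :
    S.K X Y (fun p => f p • Z p) = f * S.K X Y Z := by
  rw [eq_sub_of_add_eq (S.K_add_K_eq_D_gf hX hY (S.vf_smul f Z hf hZ)),
    S.K_smul_middle f hf hX hZ hY, eq_sub_of_add_eq (S.K_add_K_eq_D_gf hX hY hZ), gf_smul_right,
    S.D_mul_fn X f _ hX hf (S.gf_smooth hY hZ), S.gf_comm Z Y]
  ring

lemma K_smul_left (f : M → ℝ) (hf : S.IsFn f) (hX : S.IsVF X) (hY : S.IsVF Y)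
    (hZ : S.IsVF Z) :
    S.K (fun p => f p • X p) Y Z = f * S.K X Y Z := by
  rw [eq_add_of_sub_eq (S.K_sub_K_eq_gf_bracket (S.vf_smul f X hf hX) hY hZ),
    S.K_smul_middle f hf hY hX hZ, eq_add_of_sub_eq (S.K_sub_K_eq_gf_bracket hX hY hZ),
    S.bracket_smul_left f hf hX hY, gf_sub_left, gf_smul_left, gf_smul_left]
  ring

section KoszulHat

variable (P : ∀ p, T p)

lemma Khat_add_left (hX : S.IsVF X) (hX' : S.IsVF X') (hY : S.IsVF Y) (hZ : S.IsVF Z) :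
    S.Khat P (X + X') Y Z = S.Khat P X Y Z + S.Khat P X' Y Z := by
  simp only [Khat, S.K_add_left hX hX' hY hZ, gf_add_left]
  ring

lemma Khat_add_middle (hX : S.IsVF X) (hY : S.IsVF Y) (hY' : S.IsVF Y') (hZ : S.IsVF Z) :
    S.Khat P X (Y + Y') Z = S.Khat P X Y Z + S.Khat P X Y' Z := by
  simp only [Khat, S.K_add_middle hX hY hY' hZ, gf_add_left]
  ring

lemma Khat_add_right (hX : S.IsVF X) (hY : S.IsVF Y) (hZ : S.IsVF Z) (hZ' : S.IsVF Z') :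
    S.Khat P X Y (Z + Z') = S.Khat P X Y Z + S.Khat P X Y Z' := by
  simp only [Khat, S.K_add_right hX hY hZ hZ', gf_add_right]
  ring

lemma Khat_smul_left (f : M → ℝ) (hf : S.IsFn f) (hX : S.IsVF X) (hY : S.IsVF Y)
    (hZ : S.IsVF Z) :
    S.Khat P (fun p => f p • X p) Y Z = f * S.Khat P X Y Z := by
  simp only [Khat, S.K_smul_left f hf hX hY hZ, gf_smul_left]
  ring

lemma Khat_smul_middle (f : M → ℝ) (hf : S.IsFn f) (hX : S.IsVF X) (hY : S.IsVF Y)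
    (hZ : S.IsVF Z) :
    S.Khat P X (fun p => f p • Y p) Z = f * S.Khat P X Y Z + S.D X f * S.gf Y Z := by
  simp only [Khat, S.K_smul_middle f hf hX hY hZ, gf_smul_left]
  ring

lemma Khat_smul_right (f : M → ℝ) (hf : S.IsFn f) (hX : S.IsVF X) (hY : S.IsVF Y)
    (hZ : S.IsVF Z) :
    S.Khat P X Y (fun p => f p • Z p) = f * S.Khat P X Y Z := by
  simp only [Khat, S.K_smul_right f hf hX hY hZ, gf_smul_right]
  ring

lemma Khat_const_smul_left (r : ℝ) (hX : S.IsVF X) (hY : S.IsVF Y) (hZ : S.IsVF Z) :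
    S.Khat P (r • X) Y Z = r • S.Khat P X Y Z :=
  S.Khat_smul_left P (fun _ => r) (S.fn_const r) hX hY hZ

lemma Khat_const_smul_middle (r : ℝ) (hX : S.IsVF X) (hY : S.IsVF Y) (hZ : S.IsVF Z) :
    S.Khat P X (r • Y) Z = r • S.Khat P X Y Z := by
  have h := S.Khat_smul_middle P (fun _ => r) (S.fn_const r) hX hY hZ
  rwa [S.D_const X r hX, zero_mul, add_zero] at h

lemma Khat_const_smul_right (r : ℝ) (hX : S.IsVF X) (hY : S.IsVF Y) (hZ : S.IsVF Z) :
    S.Khat P X Y (r • Z) = r • S.Khat P X Y Z :=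
  S.Khat_smul_right P (fun _ => r) (S.fn_const r) hX hY hZ

lemma Khat_add_Khat_eq_D_gf (hX : S.IsVF X) (hY : S.IsVF Y) (hZ : S.IsVF Z) :
    S.Khat P X Y Z + S.Khat P X Z Y
      = S.D X (S.gf Y Z) + S.gf Y P * S.gf X Z + S.gf Z P * S.gf X Y := by
  rw [Khat, Khat, ← S.K_add_K_eq_D_gf hX hY hZ]
  ring

lemma Khat_sub_Khat_eq_gf (hX : S.IsVF X) (hY : S.IsVF Y) (hZ : S.IsVF Z) :
    S.Khat P X Y Z - S.Khat P Y X Z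
      = S.gf ((S.bracket X Y + fun p => S.gf Y P p • X p) - fun p => S.gf X P p • Y p) Z := by
  simp only [Khat, gf_sub_left, gf_add_left, gf_smul_left, ← S.K_sub_K_eq_gf_bracket hX hY hZ]
  ring

lemma Khat_add_Khat_eq_lieD (hX : S.IsVF X) (hY : S.IsVF Y) (hZ : S.IsVF Z) :
    S.Khat P X Y Z + S.Khat P Z Y X = S.lieD Y Z X + (2 : ℝ) • (S.gf Y P * S.gf X Z) := by
  rw [Khat, Khat, ← S.K_add_K_eq_lieD hX hY hZ, two_smul, S.gf_comm Z X]
  ring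

lemma Khat_add_Khat_rotate (X Y Z : ∀ p, T p) :
    S.Khat P X Y Z + S.Khat P Y Z X
      = S.D Y (S.gf Z X) + S.gf (S.bracket X Y) Z
        + S.gf Y P * S.gf X Z + S.gf Z P * S.gf X Y := by
  rw [Khat, Khat, ← S.K_add_K_rotate, S.gf_comm Y X]
  ring

end KoszulHat

end SSRM

theorem semiSymmetricNonMetricKoszul_properties_general
    {M : Type*} {T : M → Type*} [∀ p, AddCommGroup (T p)] [∀ p, Module ℝ (T p)]
    (S : SSRM M T) (P : ∀ p, T p)
    (X Y Z : ∀ p, T p) (hX : S.IsVF X) (hY : S.IsVF Y) (hZ : S.IsVF Z)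
    (f : M → ℝ) (hf : S.IsFn f) :
    -- (1) additivity and ℝ-linearity in each of the three arguments
    (∀ X', S.IsVF X' → S.Khat P (X + X') Y Z = S.Khat P X Y Z + S.Khat P X' Y Z) ∧
    (∀ Y', S.IsVF Y' → S.Khat P X (Y + Y') Z = S.Khat P X Y Z + S.Khat P X Y' Z) ∧
    (∀ Z', S.IsVF Z' → S.Khat P X Y (Z + Z') = S.Khat P X Y Z + S.Khat P X Y Z') ∧
    (∀ r : ℝ, S.Khat P (r • X) Y Z = r • S.Khat P X Y Z) ∧
    (∀ r : ℝ, S.Khat P X (r • Y) Z = r • S.Khat P X Y Z) ∧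
    (∀ r : ℝ, S.Khat P X Y (r • Z) = r • S.Khat P X Y Z) ∧
    -- (2) `K̂(fX,Y,Z) = f·K̂(X,Y,Z)`
    S.Khat P (fun p => f p • X p) Y Z = f * S.Khat P X Y Z ∧
    -- (3) `K̂(X,fY,Z) = f·K̂(X,Y,Z) + X(f)⟨Y,Z⟩`
    S.Khat P X (fun p => f p • Y p) Z = f * S.Khat P X Y Z + S.D X f * S.gf Y Z ∧
    -- (4) `K̂(X,Y,fZ) = f·K̂(X,Y,Z)`
    S.Khat P X Y (fun p => f p • Z p) = f * S.Khat P X Y Z ∧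
    -- (5) `K̂(X,Y,Z) + K̂(X,Z,Y) = X⟨Y,Z⟩ + g(Y,P)g(X,Z) + g(Z,P)g(X,Y)`
    S.Khat P X Y Z + S.Khat P X Z Y
      = S.D X (S.gf Y Z) + S.gf Y P * S.gf X Z + S.gf Z P * S.gf X Y ∧
    -- (6) `K̂(X,Y,Z) − K̂(Y,X,Z) = ⟨[X,Y] + g(Y,P)X − g(X,P)Y, Z⟩`
    S.Khat P X Y Z - S.Khat P Y X Z
      = S.gf ((S.bracket X Y + fun p => S.gf Y P p • X p) - fun p => S.gf X P p • Y p) Z ∧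
    -- (7) `K̂(X,Y,Z) + K̂(Z,Y,X) = (L_Y g)(Z,X) + 2g(Y,P)g(X,Z)`
    S.Khat P X Y Z + S.Khat P Z Y X
      = S.lieD Y Z X + (2 : ℝ) • (S.gf Y P * S.gf X Z) ∧
    -- (8) `K̂(X,Y,Z) + K̂(Y,Z,X)
    --        = Y⟨Z,X⟩ + ⟨[X,Y],Z⟩ + g(Y,P)g(X,Z) + g(Z,P)g(X,Y)`
    S.Khat P X Y Z + S.Khat P Y Z X
      = S.D Y (S.gf Z X) + S.gf (S.bracket X Y) Z
        + S.gf Y P * S.gf X Z + S.gf Z P * S.gf X Y := by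
  exact ⟨fun _ hX' => S.Khat_add_left P hX hX' hY hZ,
    fun _ hY' => S.Khat_add_middle P hX hY hY' hZ,
    fun _ hZ' => S.Khat_add_right P hX hY hZ hZ',
    fun r => S.Khat_const_smul_left P r hX hY hZ,
    fun r => S.Khat_const_smul_middle P r hX hY hZ,
    fun r => S.Khat_const_smul_right P r hX hY hZ,
    S.Khat_smul_left P f hf hX hY hZ,
    S.Khat_smul_middle P f hf hX hY hZ,
    S.Khat_smul_right P f hf hX hY hZ,
    S.Khat_add_Khat_eq_D_gf P hX hY hZ,
    S.Khat_sub_Khat_eq_gf P hX hY hZ,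
    S.Khat_add_Khat_eq_lieD P hX hY hZ,
    S.Khat_add_Khat_rotate P X Y Z⟩

/-- Theorem 3.2: properties of the semi-symmetric non-metric Koszul
form `K̂` of a singular semi-Riemannian manifold `(M,g)` with respect to a fixed
vector field `P`. -/
theorem semiSymmetricNonMetricKoszul_properties
    {M : Type*} {T : M → Type*} [∀ p, AddCommGroup (T p)] [∀ p, Module ℝ (T p)]
    (S : SSRM M T) (P : ∀ p, T p) (hP : S.IsVF P)
    (X Y Z : ∀ p, T p) (hX : S.IsVF X) (hY : S.IsVF Y) (hZ : S.IsVF Z)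
    (f : M → ℝ) (hf : S.IsFn f) :
    -- (1) additivity and ℝ-linearity in each of the three arguments
    (∀ X', S.IsVF X' → S.Khat P (X + X') Y Z = S.Khat P X Y Z + S.Khat P X' Y Z) ∧
    (∀ Y', S.IsVF Y' → S.Khat P X (Y + Y') Z = S.Khat P X Y Z + S.Khat P X Y' Z) ∧
    (∀ Z', S.IsVF Z' → S.Khat P X Y (Z + Z') = S.Khat P X Y Z + S.Khat P X Y Z') ∧
    (∀ r : ℝ, S.Khat P (r • X) Y Z = r • S.Khat P X Y Z) ∧
    (∀ r : ℝ, S.Khat P X (r • Y) Z = r • S.Khat P X Y Z) ∧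
    (∀ r : ℝ, S.Khat P X Y (r • Z) = r • S.Khat P X Y Z) ∧
    -- (2) `K̂(fX,Y,Z) = f·K̂(X,Y,Z)`
    S.Khat P (fun p => f p • X p) Y Z = f * S.Khat P X Y Z ∧
    -- (3) `K̂(X,fY,Z) = f·K̂(X,Y,Z) + X(f)⟨Y,Z⟩`
    S.Khat P X (fun p => f p • Y p) Z = f * S.Khat P X Y Z + S.D X f * S.gf Y Z ∧
    -- (4) `K̂(X,Y,fZ) = f·K̂(X,Y,Z)`
    S.Khat P X Y (fun p => f p • Z p) = f * S.Khat P X Y Z ∧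
    -- (5) `K̂(X,Y,Z) + K̂(X,Z,Y) = X⟨Y,Z⟩ + g(Y,P)g(X,Z) + g(Z,P)g(X,Y)`
    S.Khat P X Y Z + S.Khat P X Z Y
      = S.D X (S.gf Y Z) + S.gf Y P * S.gf X Z + S.gf Z P * S.gf X Y ∧
    -- (6) `K̂(X,Y,Z) − K̂(Y,X,Z) = ⟨[X,Y] + g(Y,P)X − g(X,P)Y, Z⟩`
    S.Khat P X Y Z - S.Khat P Y X Z
      = S.gf ((S.bracket X Y + fun p => S.gf Y P p • X p) - fun p => S.gf X P p • Y p) Z ∧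
    -- (7) `K̂(X,Y,Z) + K̂(Z,Y,X) = (L_Y g)(Z,X) + 2g(Y,P)g(X,Z)`
    S.Khat P X Y Z + S.Khat P Z Y X
      = S.lieD Y Z X + (2 : ℝ) • (S.gf Y P * S.gf X Z) ∧
    -- (8) `K̂(X,Y,Z) + K̂(Y,Z,X)
    --        = Y⟨Z,X⟩ + ⟨[X,Y],Z⟩ + g(Y,P)g(X,Z) + g(Z,P)g(X,Y)`
    S.Khat P X Y Z + S.Khat P Y Z X
      = S.D Y (S.gf Z X) + S.gf (S.bracket X Y) Z
        + S.gf Y P * S.gf X Z + S.gf Z P * S.gf X Y :=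
  semiSymmetricNonMetricKoszul_properties_general S P X Y Z hX hY hZ f hf
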